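/- Let G be a graph, v a vertex with deg(v) = 2 and neighbors v₁, v₂, and let G' = (G − v) + v₁v₂ (the edge v₁v₂ added if not already present). If G' admits a distance-2 coloring with k colors where k ≥ 2Δ(G) + 1, then G admits a distance-2 coloring with k colors. -/

import Mathlib

/-!
Color `G - v` by restricting a coloring of `G'`: since `N(v) = {v₁, v₂}` and `v₁v₂` is an edge
of `G'`, every pair of vertices other than `v` at distance at most two in `G` is still at distance
at most two in `G'`. At most `deg v · Δ(G) = 2Δ(G)` vertices lie within distance two of `v`, so
one of the `k ≥ 2Δ(G) + 1` colors is free for `v`.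
-/

/-- A distance-2 coloring with `k` colors: any two distinct vertices at
distance at most 2 (i.e. adjacent or with a common neighbor) receive
distinct colors. -/
def IsDist2Coloring {W : Type*} (H : SimpleGraph W) {k : ℕ} (c : W → Fin k) : Prop :=
  ∀ u w, u ≠ w → (H.Adj u w ∨ ∃ x, H.Adj u x ∧ H.Adj x w) → c u ≠ c w

/-- Add the edge `ab` to a graph (no effect if already present or `a = b`). -/
def addEdge {W : Type*} (H : SimpleGraph W) (a b : W) : SimpleGraph W :=
  H ⊔ SimpleGraph.fromEdgeSet {s(a, b)}

namespace SimpleGraph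

open Finset

variable {V : Type*} (G : SimpleGraph V)

def WithinTwo (u w : V) : Prop :=
  G.Adj u w ∨ ∃ x, G.Adj u x ∧ G.Adj x w

variable {G}

theorem WithinTwo.symm {u w : V} : G.WithinTwo u w → G.WithinTwo w u
  | .inl h => .inl h.symm
  | .inr ⟨x, hux, hxw⟩ => .inr ⟨x, hxw.symm, hux.symm⟩

theorem withinTwo_addEdge_induce {v v₁ v₂ : V} (hv₁ : v₁ ≠ v) (hv₂ : v₂ ≠ v)
    (hN : ∀ x, G.Adj v x → x = v₁ ∨ x = v₂) {u w : V} (hu : u ≠ v) (hw : w ≠ v) (huw : u ≠ w)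
    (h : G.WithinTwo u w) :
    (addEdge (G.induce {u | u ≠ v}) ⟨v₁, hv₁⟩ ⟨v₂, hv₂⟩).WithinTwo ⟨u, hu⟩ ⟨w, hw⟩ := by
  rcases h with h | ⟨x, hux, hxw⟩
  · exact .inl (.inl h)
  by_cases hx : x = v
  · subst hx
    -- both `u` and `w` are neighbours of `x`, so `{u, w} = {v₁, v₂}`, the added edge
    refine .inl (.inr ⟨?_, by simpa [Subtype.ext_iff] using huw⟩)
    rcases hN u hux.symm with rfl | rfl <;> rcases hN w hxw with rfl | rfl <;> simp_all
  · exact .inr ⟨⟨x, hx⟩, .inl hux, .inl hxw⟩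

theorem isDist2Coloring_dite [DecidableEq V] {k : ℕ} {v : V} (c : {u : V | u ≠ v} → Fin k)
    (a : Fin k)
    (hc : ∀ u w (hu : u ≠ v) (hw : w ≠ v), u ≠ w → G.WithinTwo u w → c ⟨u, hu⟩ ≠ c ⟨w, hw⟩)
    (ha : ∀ w (hw : w ≠ v), G.WithinTwo v w → c ⟨w, hw⟩ ≠ a) :
    IsDist2Coloring G fun u => if h : u = v then a else c ⟨u, h⟩ := by
  intro u w huw (h : G.WithinTwo u w)
  by_cases hu : u = v <;> by_cases hw : w = v
  · exact absurd (hu.trans hw.symm) huw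
  · subst hu
    simpa [hw] using (ha w hw h).symm
  · subst hw
    simpa [hu] using ha u hu h.symm
  · simpa [hu, hw] using hc u w hu hw huw h

section Finite

variable [Fintype V] [DecidableEq V] [DecidableRel G.Adj]

variable (G) in
def twoBall (v : V) : Finset V :=
  (G.neighborFinset v).biUnion fun x => insert x ((G.neighborFinset x).erase v)

theorem mem_twoBall {v w : V} (hw : w ≠ v) (h : G.WithinTwo v w) : w ∈ G.twoBall v := by
  rcases h with h | ⟨x, hvx, hxw⟩
  · exact mem_biUnion.2 ⟨w, by simpa using h, mem_insert_self _ _⟩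
  · exact mem_biUnion.2 ⟨x, by simpa using hvx, by simp [hw, hxw]⟩

variable (G) in
theorem card_twoBall_le (v : V) : #(G.twoBall v) ≤ G.degree v * G.maxDegree := by
  have hx : ∀ x ∈ G.neighborFinset v, #(insert x ((G.neighborFinset x).erase v)) ≤ G.maxDegree := by
    intro x hvx
    have hxv : v ∈ G.neighborFinset x := by simpa [adj_comm] using hvx
    calc #(insert x ((G.neighborFinset x).erase v))
        ≤ #((G.neighborFinset x).erase v) + 1 := card_insert_le _ _
      _ = G.degree x := by rw [card_erase_add_one hxv, card_neighborFinset_eq_degree]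
      _ ≤ G.maxDegree := G.degree_le_maxDegree x
  calc #(G.twoBall v)
      ≤ ∑ x ∈ G.neighborFinset v, #(insert x ((G.neighborFinset x).erase v)) := card_biUnion_le
    _ ≤ #(G.neighborFinset v) • G.maxDegree := sum_le_card_nsmul _ _ _ hx
    _ = G.degree v * G.maxDegree := by rw [card_neighborFinset_eq_degree, smul_eq_mul]

theorem exists_color_ne_of_withinTwo {k : ℕ} {v : V} (hk : G.degree v * G.maxDegree < k)
    (c : {u : V | u ≠ v} → Fin k) :
    ∃ a, ∀ w (hw : w ≠ v), G.WithinTwo v w → c ⟨w, hw⟩ ≠ a := by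
  set used := ((G.twoBall v).subtype (· ∈ {u : V | u ≠ v})).image c
  have hused : #used < #(univ : Finset (Fin k)) :=
    calc #used ≤ #((G.twoBall v).subtype (· ∈ {u : V | u ≠ v})) := card_image_le
      _ ≤ #(G.twoBall v) := by rw [card_subtype]; exact card_filter_le _ _
      _ < #(univ : Finset (Fin k)) := by
          rw [card_univ, Fintype.card_fin]; exact (G.card_twoBall_le v).trans_lt hk
  obtain ⟨a, -, ha⟩ := exists_mem_notMem_of_card_lt_card hused
  refine ⟨a, fun w hw h hwa => ha ?_⟩
  exact hwa ▸ mem_image_of_mem c (mem_subtype.2 (mem_twoBall hw h))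

theorem adj_eq_or_eq_of_degree_eq_two {v v₁ v₂ : V} (hdeg : G.degree v = 2) (h1 : G.Adj v v₁)
    (h2 : G.Adj v v₂) (hne : v₁ ≠ v₂) {x : V} (hx : G.Adj v x) : x = v₁ ∨ x = v₂ := by
  have hN : G.neighborFinset v = {v₁, v₂} :=
    (eq_of_subset_of_card_le (by simp [insert_subset_iff, h1, h2])
      (by rw [card_neighborFinset_eq_degree, hdeg, card_pair hne])).symm
  simpa [hN] using (G.mem_neighborFinset v x).2 hx

end Finite

end SimpleGraph

/-- If `deg(v) = 2` with `N(v) = {v₁, v₂}` and `G' = (G - v) + v₁v₂` admits a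
distance-2 coloring with `k ≥ 2Δ(G) + 1` colors, then so does `G`. -/
theorem stmt7 {V : Type*} [Fintype V] [DecidableEq V] (G : SimpleGraph V)
    [DecidableRel G.Adj] (v v₁ v₂ : V) (k : ℕ)
    (hdeg : G.degree v = 2) (h1 : G.Adj v v₁) (h2 : G.Adj v v₂) (hne : v₁ ≠ v₂)
    (hk : 2 * G.maxDegree + 1 ≤ k)
    (hcol : ∃ c : {u : V | u ≠ v} → Fin k,
      IsDist2Coloring
        (addEdge (G.induce {u | u ≠ v}) ⟨v₁, h1.ne'⟩ ⟨v₂, h2.ne'⟩) c) :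
    ∃ c : V → Fin k, IsDist2Coloring G c := by
  obtain ⟨c, hc⟩ := hcol
  obtain ⟨a, ha⟩ := SimpleGraph.exists_color_ne_of_withinTwo (by rw [hdeg]; omega) c
  refine ⟨_, SimpleGraph.isDist2Coloring_dite c a (fun u w hu hw huw h => ?_) ha⟩
  have hN (x : V) : G.Adj v x → x = v₁ ∨ x = v₂ :=
    SimpleGraph.adj_eq_or_eq_of_degree_eq_two hdeg h1 h2 hne
  exact hc _ _ (by simpa [Subtype.ext_iff] using huw) <|
    SimpleGraph.withinTwo_addEdge_induce h1.ne' h2.ne' hN hu hw huw h
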